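/- arXiv:2403.11477 — 2 statements merged into one kernel-verified Lean document; each statement's English description precedes it below -/
import Mathlib

section
/- For any finite MDP (P,r), any discount γ ∈ (0,1), and any deterministic stationary policy π, one has γ·||(I − γP_π)^{-1}·√(𝕍_{P_π}[V_γ^π])||_∞ ≤ √(2/(1−γ)) · √(||𝕍^π[Σ_{t=0}^∞ γ^t R_t]||_∞), where the square root of a vector is taken entrywise. -/
open Filter Matrix MeasureTheory
open scoped BigOperators ENNReal

set_option linter.unusedSectionVars false
set_option maxHeartbeats 1000000

namespace PaperMDP

variable {S A : Type*}

section Core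

variable [Fintype S] [Fintype A] [DecidableEq S] [Nonempty S] [Nonempty A]

/-- `p` is a transition probability kernel on `S × A`. -/
def IsKernel (p : S → A → S → ℝ) : Prop :=
  ∀ s a, (∀ s', 0 ≤ p s a s') ∧ (∑ s', p s a s') = 1

/-- `pol` is a stationary Markov (randomized) policy. -/
def IsPolicy (pol : S → A → ℝ) : Prop :=
  ∀ s, (∀ a, 0 ≤ pol s a) ∧ (∑ a, pol s a) = 1

/-- Transition matrix `P_π` induced by a policy. -/
def polMat (p : S → A → S → ℝ) (pol : S → A → ℝ) : Matrix S S ℝ :=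
  Matrix.of fun s s' => ∑ a, pol s a * p s a s'

/-- Reward vector `r_π` induced by a policy. -/
def polRew (r : S → A → ℝ) (pol : S → A → ℝ) : S → ℝ := fun s => ∑ a, pol s a * r s a

/-- The deterministic policy induced by `d : S → A`, viewed as a randomized policy. -/
def detPol [DecidableEq A] (d : S → A) : S → A → ℝ := fun s a => if a = d s then 1 else 0

/-- `(I - γ M)⁻¹ v = ∑_{t ≥ 0} γ^t M^t v` (Neumann series). -/
noncomputable def resApply (γ : ℝ) (M : Matrix S S ℝ) (v : S → ℝ) : S → ℝ :=
  ∑' t : ℕ, γ ^ t • (M ^ t *ᵥ v)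

/-- Discounted value function `V_γ^π`. -/
noncomputable def dval (p : S → A → S → ℝ) (r : S → A → ℝ) (γ : ℝ) (pol : S → A → ℝ) :
    S → ℝ :=
  resApply γ (polMat p pol) (polRew r pol)

/-- Optimal discounted value function `V_γ^*`. -/
noncomputable def dvalStar (p : S → A → S → ℝ) (r : S → A → ℝ) (γ : ℝ) : S → ℝ := fun s =>
  ⨆ q : {q : S → A → ℝ // IsPolicy q}, dval p r γ q.1 s

/-- `pol` is an optimal policy for the `γ`-discounted MDP `(p, r, γ)`. -/
def DiscountedOptimal (p : S → A → S → ℝ) (r : S → A → ℝ) (γ : ℝ) (pol : S → A → ℝ) :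
    Prop :=
  IsPolicy pol ∧ ∀ q : S → A → ℝ, IsPolicy q → ∀ s, dval p r γ q s ≤ dval p r γ pol s

/-- Cesàro limit of a sequence of vectors. -/
noncomputable def cesaro (f : ℕ → S → ℝ) : S → ℝ :=
  limUnder atTop fun N : ℕ => (N : ℝ)⁻¹ • ∑ T ∈ Finset.range N, f T

/-- The gain (long-run average reward) `ρ^π`. -/
noncomputable def gain (p : S → A → S → ℝ) (r : S → A → ℝ) (pol : S → A → ℝ) : S → ℝ :=
  cesaro fun t => (polMat p pol ^ t) *ᵥ polRew r pol

/-- The bias function `h^π`. -/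
noncomputable def bias (p : S → A → S → ℝ) (r : S → A → ℝ) (pol : S → A → ℝ) : S → ℝ :=
  cesaro fun T => ∑ t ∈ Finset.range T, ((polMat p pol ^ t) *ᵥ polRew r pol - gain p r pol)

/-- Blackwell optimality of a policy. -/
def Blackwell (p : S → A → S → ℝ) (r : S → A → ℝ) (pol : S → A → ℝ) : Prop :=
  IsPolicy pol ∧ ∃ γ₀ ∈ Set.Ioo (0 : ℝ) 1, ∀ γ ∈ Set.Ico γ₀ 1,
    ∀ q : S → A → ℝ, IsPolicy q → ∀ s, dval p r γ q s ≤ dval p r γ pol s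

/-- The optimal gain `ρ^*(s) = sup_π ρ^π(s)`. -/
noncomputable def gainStar (p : S → A → S → ℝ) (r : S → A → ℝ) : S → ℝ := fun s =>
  ⨆ q : {q : S → A → ℝ // IsPolicy q}, gain p r q.1 s

/-- Span seminorm `sp(v) = max v - min v`. -/
noncomputable def span (v : S → ℝ) : ℝ := (⨆ s, v s) - (⨅ s, v s)

/-- `s'` is reachable from `s` in the Markov chain with transition matrix `M`. -/
def Reaches (M : Matrix S S ℝ) (s s' : S) : Prop := ∃ t : ℕ, 0 < (M ^ t) s s'

/-- A state of a finite Markov chain is recurrent iff its communicating class is closed. -/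
def Recurrent (M : Matrix S S ℝ) (s : S) : Prop := ∀ s', Reaches M s s' → Reaches M s' s

/-- Weakly communicating MDP. -/
def WeaklyCommunicating (p : S → A → S → ℝ) : Prop :=
  ∃ S1 : Set S,
    (∀ s ∈ S1, ∀ pol : S → A → ℝ, IsPolicy pol → ¬Recurrent (polMat p pol) s) ∧
    ∀ s ∉ S1, ∀ s' ∉ S1, ∃ pol : S → A → ℝ, IsPolicy pol ∧ Reaches (polMat p pol) s s'

/-- The probability that the chain `M` started at `s` is in a transient state at time `t`.
For a finite chain, `E_s[T_{R}] = ∑_{t} transientMass M s t`, since the set of recurrent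
states is closed. -/
noncomputable def transientMass (M : Matrix S S ℝ) (s : S) (t : ℕ) : ℝ :=
  ∑ s', Set.indicator {x : S | ¬Recurrent M x} (fun x => (M ^ t) s x) s'

/-- The bounded transient time property with parameter `B`:
`E_s^π[T_{R^π}] ≤ B` for every deterministic stationary policy and every state. -/
def BoundedTransientTime [DecidableEq A] (p : S → A → S → ℝ) (B : ℝ) : Prop :=
  ∀ (d : S → A) (s : S) (n : ℕ),
    (∑ t ∈ Finset.range n, transientMass (polMat p (detPol d)) s t) ≤ B

/-- One-step variance vector `𝕍_{P}[V]`. -/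
noncomputable def oneStepVar (M : Matrix S S ℝ) (V : S → ℝ) : S → ℝ := fun s =>
  ∑ s', M s s' * (V s' - (M *ᵥ V) s) ^ 2

/-- Probability of the path `(S_0, …, S_T) = path` for the chain `M` started at `s`. -/
noncomputable def pathProb (M : Matrix S S ℝ) (s : S) {T : ℕ} (path : Fin (T + 1) → S) : ℝ :=
  (if path 0 = s then 1 else 0) * ∏ i : Fin T, M (path i.castSucc) (path i.succ)

/-- Expectation of a function of `(S_0, …, S_T)` for the chain `M` started at `s`. -/
noncomputable def pathExp (M : Matrix S S ℝ) (s : S) (T : ℕ) (f : (Fin (T + 1) → S) → ℝ) :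
    ℝ :=
  ∑ path : Fin (T + 1) → S, pathProb M s path * f path

/-- Variance of a function of `(S_0, …, S_T)` for the chain `M` started at `s`. -/
noncomputable def pathVar (M : Matrix S S ℝ) (s : S) (T : ℕ) (f : (Fin (T + 1) → S) → ℝ) :
    ℝ :=
  pathExp M s T fun path => (f path - pathExp M s T f) ^ 2

/-- Variance of the infinite-horizon discounted return, `𝕍_s^π[∑_{t} γ^t R_t]`,
as the limit of the variances of the truncated returns. -/
noncomputable def returnVar (M : Matrix S S ℝ) (rv : S → ℝ) (γ : ℝ) : S → ℝ := fun s =>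
  limUnder atTop fun T : ℕ =>
    pathVar M s T fun path => ∑ t : Fin (T + 1), γ ^ (t : ℕ) * rv (path t)

end Core

section AuxLemmas

variable [Fintype S] [DecidableEq S] [Nonempty S]

/-- row-stochastic matrix -/
def Stoch (M : Matrix S S ℝ) : Prop := (∀ s s', 0 ≤ M s s') ∧ ∀ s, ∑ s', M s s' = 1

lemma Stoch.pow {M : Matrix S S ℝ} (h : Stoch M) (t : ℕ) : Stoch (M ^ t) := by
  induction t with
  | zero =>
    refine ⟨fun s s' => ?_, fun s => ?_⟩
    · rw [pow_zero, Matrix.one_apply]; positivity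
    · simp [Matrix.one_apply]
  | succ t ih =>
    rw [pow_succ]
    refine ⟨fun s s' => ?_, fun s => ?_⟩
    · rw [Matrix.mul_apply]
      exact Finset.sum_nonneg fun k _ => mul_nonneg (ih.1 s k) (h.1 k s')
    · simp only [Matrix.mul_apply]
      rw [Finset.sum_comm]
      simp only [← Finset.mul_sum]
      simp [h.2, ih.2 s]

lemma mulVec_abs_le {M : Matrix S S ℝ} (h : Stoch M) {x : S → ℝ} {C : ℝ}
    (hx : ∀ s, |x s| ≤ C) (s : S) : |(M *ᵥ x) s| ≤ C := by
  have hC : (0:ℝ) ≤ C := le_trans (abs_nonneg _) (hx (Classical.arbitrary S))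
  calc |(M *ᵥ x) s| ≤ ∑ s', |M s s' * x s'| := Finset.abs_sum_le_sum_abs _ _
    _ ≤ ∑ s', M s s' * C := by
        refine Finset.sum_le_sum fun s' _ => ?_
        rw [abs_mul, abs_of_nonneg (h.1 s s')]
        exact mul_le_mul_of_nonneg_left (hx s') (h.1 s s')
    _ = C := by rw [← Finset.sum_mul, h.2 s, one_mul]

lemma mulVec_nonneg' {M : Matrix S S ℝ} (h : Stoch M) {x : S → ℝ}
    (hx : ∀ s, 0 ≤ x s) (s : S) : 0 ≤ (M *ᵥ x) s :=
  Finset.sum_nonneg fun s' _ => mul_nonneg (h.1 s s') (hx s')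

lemma mulVec_le {M : Matrix S S ℝ} (h : Stoch M) {x : S → ℝ} {C : ℝ}
    (hx : ∀ s, x s ≤ C) (s : S) : (M *ᵥ x) s ≤ C := by
  calc (M *ᵥ x) s ≤ ∑ s', M s s' * C :=
        Finset.sum_le_sum fun s' _ => mul_le_mul_of_nonneg_left (hx s') (h.1 s s')
    _ = C := by rw [← Finset.sum_mul, h.2 s, one_mul]


variable {M : Matrix S S ℝ} {γ : ℝ} {x : S → ℝ} {C : ℝ}

lemma summable_res (hM : Stoch M) (hγ0 : 0 ≤ γ) (hγ1 : γ < 1)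
    (hx : ∀ s, |x s| ≤ C) (s : S) :
    Summable (fun t : ℕ => γ ^ t * ((M ^ t) *ᵥ x) s) := by
  refine Summable.of_norm_bounded (Summable.mul_left C
    (summable_geometric_of_lt_one hγ0 hγ1)) fun t => ?_
  rw [Real.norm_eq_abs, abs_mul, abs_pow, abs_of_nonneg hγ0, mul_comm C]
  exact mul_le_mul_of_nonneg_left (mulVec_abs_le (hM.pow t) hx s) (by positivity)

/-- canonical bound -/
noncomputable def bnd (x : S → ℝ) : ℝ := ‖x‖

lemma abs_le_bnd (x : S → ℝ) (s : S) : |x s| ≤ bnd x := by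
  simpa [bnd] using norm_le_pi_norm x s

lemma summable_res' (hM : Stoch M) (hγ0 : 0 ≤ γ) (hγ1 : γ < 1) (x : S → ℝ) (s : S) :
    Summable (fun t : ℕ => γ ^ t * ((M ^ t) *ᵥ x) s) :=
  summable_res hM hγ0 hγ1 (abs_le_bnd x) s

lemma resApply_apply (hM : Stoch M) (hγ0 : 0 ≤ γ) (hγ1 : γ < 1) (x : S → ℝ) (s : S) :
    resApply γ M x s = ∑' t : ℕ, γ ^ t * ((M ^ t) *ᵥ x) s := by
  rw [resApply, tsum_apply]
  · rfl
  · rw [Pi.summable]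
    intro s'
    simpa [Pi.smul_apply, smul_eq_mul] using summable_res' hM hγ0 hγ1 x s'

lemma resApply_nonneg (hM : Stoch M) (hγ0 : 0 ≤ γ) (hγ1 : γ < 1)
    (hx : ∀ s, 0 ≤ x s) (s : S) : 0 ≤ resApply γ M x s := by
  rw [resApply_apply hM hγ0 hγ1]
  exact tsum_nonneg fun t => mul_nonneg (by positivity) (mulVec_nonneg' (hM.pow t) hx s)

lemma resApply_le (hM : Stoch M) (hγ0 : 0 ≤ γ) (hγ1 : γ < 1)
    (hx0 : ∀ s, 0 ≤ x s) (hx : ∀ s, x s ≤ C) (s : S) :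
    resApply γ M x s ≤ C / (1 - γ) := by
  rw [resApply_apply hM hγ0 hγ1, div_eq_mul_inv, ← tsum_geometric_of_lt_one hγ0 hγ1,
    ← tsum_mul_left]
  refine Summable.tsum_le_tsum (fun t => ?_) (summable_res' hM hγ0 hγ1 x s)
    (Summable.mul_left C (summable_geometric_of_lt_one hγ0 hγ1))
  rw [mul_comm C]
  exact mul_le_mul_of_nonneg_left (mulVec_le (hM.pow t) hx s) (by positivity)

lemma resApply_bellman (hM : Stoch M) (hγ0 : 0 ≤ γ) (hγ1 : γ < 1) (x : S → ℝ) (s : S) :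
    resApply γ M x s = x s + γ * (M *ᵥ resApply γ M x) s := by
  have h1 : resApply γ M x s = x s + ∑' t : ℕ, γ ^ (t+1) * ((M ^ (t+1)) *ᵥ x) s := by
    rw [resApply_apply hM hγ0 hγ1, Summable.tsum_eq_zero_add (summable_res' hM hγ0 hγ1 x s)]
    simp
  rw [h1]
  congr 1
  have h2 : (M *ᵥ resApply γ M x) s = ∑' t : ℕ, γ ^ t * ((M ^ (t+1)) *ᵥ x) s := by
    rw [Matrix.mulVec]
    simp only [dotProduct]
    have : ∀ s', resApply γ M x s' = ∑' t : ℕ, γ ^ t * ((M ^ t) *ᵥ x) s' :=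
      resApply_apply hM hγ0 hγ1 x
    calc ∑ s', M s s' * resApply γ M x s'
        = ∑ s', ∑' t : ℕ, M s s' * (γ ^ t * ((M ^ t) *ᵥ x) s') := by
          refine Finset.sum_congr rfl fun s' _ => ?_
          rw [this s', tsum_mul_left]
      _ = ∑' t : ℕ, ∑ s', M s s' * (γ ^ t * ((M ^ t) *ᵥ x) s') := by
          rw [Summable.tsum_finsetSum]
          intro s' _
          exact (summable_res' hM hγ0 hγ1 x s').mul_left _
      _ = ∑' t : ℕ, γ ^ t * ((M ^ (t+1)) *ᵥ x) s := by
          refine tsum_congr fun t => ?_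
          rw [pow_succ']
          rw [← Matrix.mulVec_mulVec]
          rw [Matrix.mulVec, dotProduct, Finset.mul_sum]
          refine Finset.sum_congr rfl fun s' _ => ?_
          ring
  rw [h2, ← tsum_mul_left]
  refine tsum_congr fun t => ?_
  ring

variable {M : Matrix S S ℝ}

lemma pathExp_zero (s : S) (f : (Fin 1 → S) → ℝ) :
    pathExp M s 0 f = f (fun _ => s) := by
  rw [pathExp]
  rw [← Equiv.sum_comp (Equiv.funUnique (Fin 1) S).symm]
  simp only [pathProb]
  rw [Finset.sum_eq_single s (fun b _ hb => by simp [Equiv.funUnique, hb]) (by simp)]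
  simp only [Equiv.funUnique, Equiv.coe_fn_symm_mk, pathProb]
  norm_num
  exact congrArg f (funext fun i => rfl)

lemma pathProb_cons (s a : S) {T : ℕ} (q : Fin (T+1) → S) :
    pathProb M s (Fin.cons a q) = (if a = s then 1 else 0) * (M a (q 0) * pathProb M (q 0) q) := by
  rw [pathProb, pathProb]
  simp only [Fin.cons_zero, if_pos rfl, one_mul]
  congr 1
  rw [Fin.prod_univ_succ]
  simp only [Fin.castSucc_zero, Fin.cons_zero, Fin.cons_succ, ← Fin.succ_castSucc,
    if_true, one_mul]

lemma pathExp_succ (hM : Stoch M) (s : S) (T : ℕ) (f : (Fin (T + 2) → S) → ℝ) :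
    pathExp M s (T+1) f = ∑ s', M s s' * pathExp M s' T (fun q => f (Fin.cons s q)) := by
  rw [pathExp]
  rw [← Equiv.sum_comp (Fin.consEquiv (fun _ : Fin (T+2) => S)) (fun p => pathProb M s p * f p)]
  rw [Fintype.sum_prod_type]
  have key : ∀ a : S, ∀ q : Fin (T+1) → S,
      pathProb M s (Fin.cons a q) * f (Fin.cons a q)
        = (if a = s then 1 else 0) * (∑ s', M s s' * (pathProb M s' q * f (Fin.cons a q))) := by
    intro a q
    rw [pathProb_cons]
    have : ∑ s', M s s' * (pathProb M s' q * f (Fin.cons a q))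
        = M s (q 0) * (pathProb M (q 0) q * f (Fin.cons a q)) := by
      refine Finset.sum_eq_single (q 0) (fun b _ hb => ?_) (by simp)
      rw [pathProb, if_neg (fun h => hb h.symm)]
      ring
    rw [this, pathProb]
    by_cases h : a = s <;> simp [h] <;> ring
  calc ∑ a : S, ∑ q : Fin (T+1) → S, pathProb M s (Fin.consEquiv _ (a, q)) * f (Fin.consEquiv _ (a, q))
      = ∑ a : S, ∑ q : Fin (T+1) → S, (if a = s then 1 else 0) *
          (∑ s', M s s' * (pathProb M s' q * f (Fin.cons a q))) := by
        refine Finset.sum_congr rfl fun a _ => Finset.sum_congr rfl fun q _ => ?_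
        exact key a q
    _ = ∑ q : Fin (T+1) → S, ∑ s', M s s' * (pathProb M s' q * f (Fin.cons s q)) := by
        rw [Finset.sum_comm]
        refine Finset.sum_congr rfl fun q _ => ?_
        rw [Finset.sum_eq_single s (fun b _ hb => by rw [if_neg hb, zero_mul]) (by simp),
          if_pos rfl, one_mul]
    _ = ∑ s', M s s' * pathExp M s' T (fun q => f (Fin.cons s q)) := by
        rw [Finset.sum_comm]
        refine Finset.sum_congr rfl fun s' _ => ?_
        rw [pathExp, Finset.mul_sum]

lemma pathExp_const (hM : Stoch M) (T : ℕ) (c : ℝ) : ∀ s : S,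
    pathExp M s T (fun _ => c) = c := by
  induction T with
  | zero => intro s; rw [pathExp_zero]
  | succ T ih =>
    intro s
    rw [pathExp_succ hM]
    simp only [ih]
    rw [← Finset.sum_mul, hM.2 s, one_mul]

lemma pathVar_eq (hM : Stoch M) (s : S) (T : ℕ) (f : (Fin (T + 1) → S) → ℝ) :
    pathVar M s T f = pathExp M s T (fun p => f p ^ 2) - (pathExp M s T f) ^ 2 := by
  have h1 : ∑ path : Fin (T+1) → S, pathProb M s path = 1 := by
    have := pathExp_const hM T (1:ℝ) s
    rw [pathExp] at this
    simpa using this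
  rw [pathVar, pathExp, pathExp, pathExp]
  set E := ∑ path : Fin (T+1) → S, pathProb M s path * f path with hE
  have : ∀ p : Fin (T+1) → S, pathProb M s p * (f p - E)^2
      = pathProb M s p * f p ^2 - 2*E*(pathProb M s p * f p) + E^2 * pathProb M s p := by
    intro p; ring
  rw [Finset.sum_congr rfl fun p _ => this p]
  rw [Finset.sum_add_distrib, Finset.sum_sub_distrib, ← Finset.mul_sum, ← Finset.mul_sum, h1, ← hE]
  ring

variable {M : Matrix S S ℝ} {γ : ℝ} (rv : S → ℝ)

lemma sum_pathProb (hM : Stoch M) (s : S) (T : ℕ) :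
    ∑ path : Fin (T+1) → S, pathProb M s path = 1 := by
  have := pathExp_const hM T (1:ℝ) s
  rw [pathExp] at this
  simpa using this

lemma pathExp_lin (hM : Stoch M) (s : S) (T : ℕ) (c a b : ℝ) (g h : (Fin (T+1) → S) → ℝ) :
    pathExp M s T (fun p => c + a * g p + b * h p)
      = c + a * pathExp M s T g + b * pathExp M s T h := by
  rw [pathExp, pathExp, pathExp]
  have : ∀ p : Fin (T+1) → S, pathProb M s p * (c + a * g p + b * h p)
      = c * pathProb M s p + a * (pathProb M s p * g p) + b * (pathProb M s p * h p) := by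
    intro p; ring
  rw [Finset.sum_congr rfl fun p _ => this p, Finset.sum_add_distrib, Finset.sum_add_distrib,
    ← Finset.mul_sum, ← Finset.mul_sum, ← Finset.mul_sum, sum_pathProb hM, mul_one]

/-- truncated discounted return -/
noncomputable def retF (γ : ℝ) (rv : S → ℝ) (T : ℕ) : (Fin (T+1) → S) → ℝ :=
  fun path => ∑ t : Fin (T+1), γ^(t:ℕ) * rv (path t)

noncomputable def eF (M : Matrix S S ℝ) (γ : ℝ) (rv : S → ℝ) (T : ℕ) : S → ℝ :=
  fun s => pathExp M s T (retF γ rv T)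

noncomputable def qF (M : Matrix S S ℝ) (γ : ℝ) (rv : S → ℝ) (T : ℕ) : S → ℝ :=
  fun s => pathExp M s T (fun p => (retF γ rv T p)^2)

lemma retF_cons (a : S) (T : ℕ) (q : Fin (T+1) → S) :
    retF γ rv (T+1) (Fin.cons a q) = rv a + γ * retF γ rv T q := by
  simp only [retF, Fin.sum_univ_succ, Fin.cons_zero, Fin.cons_succ, Fin.val_succ,
    Fin.val_zero, pow_zero, one_mul, pow_succ']
  rw [mul_add, Finset.mul_sum]
  simp only [mul_one, mul_assoc]

lemma retF_zero (s : S) : retF γ rv 0 (fun _ => s) = rv s := by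
  rw [retF, Fin.sum_univ_one]
  simp

lemma eF_zero (s : S) : eF M γ rv 0 s = rv s := by
  rw [eF, pathExp_zero, retF_zero]

lemma qF_zero (s : S) : qF M γ rv 0 s = (rv s)^2 := by
  rw [qF, pathExp_zero, retF_zero]

lemma eF_succ (hM : Stoch M) (T : ℕ) (s : S) :
    eF M γ rv (T+1) s = rv s + γ * (M *ᵥ eF M γ rv T) s := by
  rw [eF, pathExp_succ hM]
  have : ∀ s', pathExp M s' T (fun q => retF γ rv (T+1) (Fin.cons s q))
      = rv s + γ * eF M γ rv T s' := by
    intro s'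
    have e : (fun q => retF γ rv (T+1) (Fin.cons s q))
        = fun q => rv s + γ * retF γ rv T q + 0 * retF γ rv T q := by
      funext q; rw [retF_cons]; ring
    rw [e, pathExp_lin hM, eF]
    ring
  rw [Finset.sum_congr rfl fun s' _ => by rw [this s']]
  have : ∀ s', M s s' * (rv s + γ * eF M γ rv T s')
      = M s s' * rv s + γ * (M s s' * eF M γ rv T s') := by intro s'; ring
  rw [Finset.sum_congr rfl fun s' _ => this s', Finset.sum_add_distrib, ← Finset.sum_mul,
    hM.2 s, one_mul, ← Finset.mul_sum]
  rfl

lemma qF_succ (hM : Stoch M) (T : ℕ) (s : S) :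
    qF M γ rv (T+1) s = (rv s)^2 + 2*γ*(rv s)*(M *ᵥ eF M γ rv T) s
      + γ^2 * (M *ᵥ qF M γ rv T) s := by
  rw [qF, pathExp_succ hM]
  have : ∀ s', pathExp M s' T (fun q => (retF γ rv (T+1) (Fin.cons s q))^2)
      = (rv s)^2 + (2*γ*rv s) * eF M γ rv T s' + γ^2 * qF M γ rv T s' := by
    intro s'
    have e : (fun q => (retF γ rv (T+1) (Fin.cons s q))^2)
        = fun q => (rv s)^2 + (2*γ*rv s) * retF γ rv T q + γ^2 * (retF γ rv T q)^2 := by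
      funext q; rw [retF_cons]; ring
    rw [e, pathExp_lin hM, eF, qF]
  rw [Finset.sum_congr rfl fun s' _ => by rw [this s']]
  have : ∀ s', M s s' * ((rv s)^2 + (2*γ*rv s) * eF M γ rv T s' + γ^2 * qF M γ rv T s')
      = M s s' * (rv s)^2 + (2*γ*rv s) * (M s s' * eF M γ rv T s')
        + γ^2 * (M s s' * qF M γ rv T s') := by intro s'; ring
  rw [Finset.sum_congr rfl fun s' _ => this s', Finset.sum_add_distrib, Finset.sum_add_distrib,
    ← Finset.sum_mul, hM.2 s, one_mul, ← Finset.mul_sum, ← Finset.mul_sum]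
  rfl

lemma oneStepVar_eq (hM : Stoch M) (v : S → ℝ) (s : S) :
    oneStepVar M v s = (M *ᵥ fun x => (v x)^2) s - ((M *ᵥ v) s)^2 := by
  rw [oneStepVar]
  have : ∀ s', M s s' * (v s' - (M *ᵥ v) s)^2
      = M s s' * (v s')^2 - 2*(M *ᵥ v) s * (M s s' * v s') + ((M *ᵥ v) s)^2 * M s s' := by
    intro s'; ring
  rw [Finset.sum_congr rfl fun s' _ => this s', Finset.sum_add_distrib, Finset.sum_sub_distrib,
    ← Finset.mul_sum, ← Finset.mul_sum, hM.2 s, mul_one]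
  rw [Matrix.mulVec, Matrix.mulVec, dotProduct, dotProduct]
  ring

noncomputable def varF (M : Matrix S S ℝ) (γ : ℝ) (rv : S → ℝ) (T : ℕ) : S → ℝ :=
  fun s => pathVar M s T (retF γ rv T)

lemma varF_eq (hM : Stoch M) (T : ℕ) (s : S) :
    varF M γ rv T s = qF M γ rv T s - (eF M γ rv T s)^2 := by
  rw [varF, pathVar_eq hM]; rfl

lemma varF_zero (hM : Stoch M) (s : S) : varF M γ rv 0 s = 0 := by
  rw [varF_eq rv hM, qF_zero, eF_zero]; ring

lemma varF_succ (hM : Stoch M) (T : ℕ) (s : S) :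
    varF M γ rv (T+1) s
      = γ^2 * ((M *ᵥ varF M γ rv T) s + oneStepVar M (eF M γ rv T) s) := by
  have hsub : (M *ᵥ varF M γ rv T) s
      = (M *ᵥ qF M γ rv T) s - (M *ᵥ fun x => (eF M γ rv T x)^2) s := by
    rw [Matrix.mulVec, Matrix.mulVec, Matrix.mulVec, dotProduct, dotProduct,
      dotProduct, ← Finset.sum_sub_distrib]
    refine Finset.sum_congr rfl fun s' _ => ?_
    rw [varF_eq rv hM]
    ring
  rw [varF_eq rv hM, qF_succ rv hM, eF_succ rv hM, hsub, oneStepVar_eq hM]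
  ring

lemma abs_le_norm' (x : S → ℝ) (s : S) : |x s| ≤ ‖x‖ := by
  simpa using norm_le_pi_norm x s

lemma mulVec_lin_pt (N : Matrix S S ℝ) (a b : ℝ) (u v : S → ℝ) (s : S) :
    (N *ᵥ fun x => a * u x + b * v x) s = a * (N *ᵥ u) s + b * (N *ᵥ v) s := by
  simp only [Matrix.mulVec, dotProduct, Finset.mul_sum, ← Finset.sum_add_distrib]
  exact Finset.sum_congr rfl fun x _ => by ring

lemma mulVec_sub_pt (N : Matrix S S ℝ) (u v : S → ℝ) (s : S) :
    (N *ᵥ fun x => u x - v x) s = (N *ᵥ u) s - (N *ᵥ v) s := by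
  simp only [Matrix.mulVec, dotProduct, ← Finset.sum_sub_distrib]
  exact Finset.sum_congr rfl fun x _ => by ring

lemma mulVec_smul_pt (N : Matrix S S ℝ) (a : ℝ) (u : S → ℝ) (s : S) :
    (N *ᵥ fun x => a * u x) s = a * (N *ᵥ u) s := by
  simp only [Matrix.mulVec, dotProduct, Finset.mul_sum]
  exact Finset.sum_congr rfl fun x _ => by ring

lemma jensen_pt {N : Matrix S S ℝ} (hN : Stoch N) {f : S → ℝ} (hf : ∀ x, 0 ≤ f x) (s : S) :
    (N *ᵥ fun x => Real.sqrt (f x)) s ≤ Real.sqrt ((N *ᵥ f) s) := by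
  have hnn : 0 ≤ (N *ᵥ fun x => Real.sqrt (f x)) s :=
    mulVec_nonneg' hN (fun x => Real.sqrt_nonneg _) s
  have hCS : ((N *ᵥ fun x => Real.sqrt (f x)) s)^2 ≤ (N *ᵥ f) s := by
    have h1 : (N *ᵥ fun x => Real.sqrt (f x)) s
        = ∑ x, Real.sqrt (N s x) * (Real.sqrt (N s x) * Real.sqrt (f x)) := by
      rw [Matrix.mulVec, dotProduct]
      refine Finset.sum_congr rfl fun x _ => ?_
      rw [← mul_assoc, Real.mul_self_sqrt (hN.1 s x)]
    have h2 := Finset.sum_mul_sq_le_sq_mul_sq Finset.univ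
      (fun x => Real.sqrt (N s x)) (fun x => Real.sqrt (N s x) * Real.sqrt (f x))
    rw [h1]
    have h3 : ∑ x, (Real.sqrt (N s x))^2 = 1 := by
      rw [Finset.sum_congr rfl fun x _ => Real.sq_sqrt (hN.1 s x)]
      exact hN.2 s
    have h4 : ∑ x, (Real.sqrt (N s x) * Real.sqrt (f x))^2 = (N *ᵥ f) s := by
      rw [Matrix.mulVec, dotProduct]
      refine Finset.sum_congr rfl fun x _ => ?_
      rw [mul_pow, Real.sq_sqrt (hN.1 s x), Real.sq_sqrt (hf x)]
    rw [h3, h4, one_mul] at h2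
    exact h2
  calc (N *ᵥ fun x => Real.sqrt (f x)) s
      = Real.sqrt (((N *ᵥ fun x => Real.sqrt (f x)) s)^2) := (Real.sqrt_sq hnn).symm
    _ ≤ Real.sqrt ((N *ᵥ f) s) := Real.sqrt_le_sqrt hCS


end AuxLemmas

/-- For any finite MDP `(p, r)`, any discount `γ ∈ (0,1)`, and any
deterministic stationary policy `d`,
`γ‖(I - γ P_π)⁻¹ √(𝕍_{P_π}[V_γ^π])‖_∞ ≤ √(2/(1-γ)) · √‖𝕍^π[∑_t γ^t R_t]‖_∞`. -/
theorem stmt7 {S A : Type*} [Fintype S] [Fintype A] [DecidableEq S] [DecidableEq A]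
    [Nonempty S] [Nonempty A]
    (p : S → A → S → ℝ) (hp : IsKernel p)
    (r : S → A → ℝ) (hr : ∀ s a, r s a ∈ Set.Icc (0 : ℝ) 1)
    (γ : ℝ) (hγ : γ ∈ Set.Ioo (0 : ℝ) 1)
    (d : S → A)
    (M : Matrix S S ℝ) (hM : M = polMat p (detPol d))
    (rv : S → ℝ) (hrv : rv = polRew r (detPol d)) :
    γ * ‖resApply γ M fun s => Real.sqrt (oneStepVar M (dval p r γ (detPol d)) s)‖ ≤
      Real.sqrt (2 / (1 - γ)) * Real.sqrt ‖returnVar M rv γ‖ := by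
  obtain ⟨hγ0, hγ1⟩ := hγ
  have hγ0' : (0:ℝ) ≤ γ := hγ0.le
  have h1γ : (0:ℝ) < 1 - γ := by linarith
  have hγ20 : (0:ℝ) ≤ γ^2 := sq_nonneg γ
  have hγ21 : γ^2 < 1 := by nlinarith
  have h1γ2 : (0:ℝ) < 1 - γ^2 := by linarith
  -- stochasticity
  have hMs : Stoch M := by
    subst hM
    constructor
    · intro s s'
      refine Finset.sum_nonneg fun a _ => mul_nonneg ?_ ((hp s a).1 s')
      by_cases h : a = d s <;> simp [detPol, h]
    · intro s
      show ∑ s', ∑ a, detPol d s a * p s a s' = 1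
      rw [Finset.sum_comm]
      have : ∀ a, ∑ s', detPol d s a * p s a s' = detPol d s a := by
        intro a
        rw [← Finset.mul_sum, (hp s a).2, mul_one]
      rw [Finset.sum_congr rfl fun a _ => this a]
      rw [Finset.sum_eq_single (d s) (fun b _ hb => by simp [detPol, hb]) (by simp)]
      simp [detPol]
  -- reward facts
  have hrv01 : ∀ s, 0 ≤ rv s ∧ rv s ≤ 1 := by
    intro s
    have hrv_eq : rv s = r s (d s) := by
      rw [hrv, polRew]
      rw [Finset.sum_eq_single (d s) (fun b _ hb => by simp [detPol, hb]) (by simp)]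
      simp [detPol]
    rw [hrv_eq]
    exact ⟨(hr s (d s)).1, (hr s (d s)).2⟩
  set B : ℝ := (1-γ)⁻¹ with hBdef
  have hB0 : 0 < B := by positivity
  have hBid : (1-γ) * B = 1 := mul_inv_cancel₀ h1γ.ne'
  have hB1 : 1 ≤ B := by nlinarith
  have h1pB : 1 + γ * B = B := by nlinarith
  -- value function
  set V : S → ℝ := resApply γ M rv with hVdef
  have hdval : dval p r γ (detPol d) = V := by
    have h : dval p r γ (detPol d)
        = resApply γ (polMat p (detPol d)) (polRew r (detPol d)) := rfl
    rw [h, ← hM, ← hrv]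
  have hV0 : ∀ s, 0 ≤ V s :=
    fun s => resApply_nonneg hMs hγ0' hγ1 (fun x => (hrv01 x).1) s
  have hVB : ∀ s, V s ≤ B := by
    intro s
    have := resApply_le hMs hγ0' hγ1 (fun x => (hrv01 x).1) (fun x => (hrv01 x).2) s
    rw [one_div] at this
    exact this
  have hVbell : ∀ s, V s = rv s + γ * (M *ᵥ V) s :=
    fun s => resApply_bellman hMs hγ0' hγ1 rv s
  set σ2 : S → ℝ := oneStepVar M V with hσ2def
  have hσ0 : ∀ s, 0 ≤ σ2 s := by
    intro s
    exact Finset.sum_nonneg fun s' _ => mul_nonneg (hMs.1 s s') (sq_nonneg _)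
  have hσB : ∀ s, σ2 s ≤ B^2 := by
    intro s
    rw [hσ2def, oneStepVar_eq hMs]
    have h1 : (M *ᵥ fun x => (V x)^2) s ≤ B^2 :=
      mulVec_le hMs (fun x => by nlinarith [hV0 x, hVB x]) s
    nlinarith [sq_nonneg ((M *ᵥ V) s)]
  obtain ⟨L, hLdef⟩ : ∃ L : S → ℝ, L = fun s => γ^2 * resApply (γ^2) M σ2 s := ⟨_, rfl⟩
  have hLs : ∀ s, L s = γ^2 * resApply (γ^2) M σ2 s := fun s => by rw [hLdef]
  have hL0 : ∀ s, 0 ≤ L s := by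
    intro s
    rw [hLs s]
    exact mul_nonneg hγ20 (resApply_nonneg hMs hγ20 hγ21 hσ0 s)
  have hLbell : ∀ s, L s = γ^2 * σ2 s + γ^2 * (M *ᵥ L) s := by
    intro s
    have hb := resApply_bellman hMs hγ20 hγ21 σ2 s
    have hsm : (M *ᵥ L) s = γ^2 * (M *ᵥ resApply (γ^2) M σ2) s := by
      rw [hLdef]
      exact mulVec_smul_pt M (γ^2) (resApply (γ^2) M σ2) s
    rw [hLs s, hsm, hb]
    ring
  have hLB : ∀ s, L s ≤ B^3 := by
    intro s
    have h1 := resApply_le hMs hγ20 hγ21 hσ0 hσB s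
    have hr0 := resApply_nonneg hMs hγ20 hγ21 hσ0 s
    have hBg2 : B*(1-γ^2) = 1+γ := by linear_combination (1+γ) * hBid
    have h2 : B^2 / (1 - γ^2) ≤ B^3 := by
      rw [div_le_iff₀ h1γ2]
      nlinarith [hB0, hγ0', sq_nonneg B]
    calc L s = γ^2 * resApply (γ^2) M σ2 s := hLs s
      _ ≤ 1 * resApply (γ^2) M σ2 s := by nlinarith
      _ ≤ B^3 := by rw [one_mul]; exact le_trans h1 h2
  -- eF bounds
  have heF01 : ∀ T s, 0 ≤ eF M γ rv T s ∧ eF M γ rv T s ≤ B := by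
    intro T
    induction T with
    | zero =>
      intro s
      rw [eF_zero]
      exact ⟨(hrv01 s).1, le_trans (hrv01 s).2 hB1⟩
    | succ T ih =>
      intro s
      rw [eF_succ rv hMs]
      constructor
      · have := mulVec_nonneg' hMs (fun x => (ih x).1) s
        nlinarith [(hrv01 s).1]
      · have := mulVec_le hMs (fun x => (ih x).2) s
        nlinarith [(hrv01 s).2]
  have heFV : ∀ T s, |eF M γ rv T s - V s| ≤ B * γ^T := by
    intro T
    induction T with
    | zero =>
      intro s
      rw [eF_zero, pow_zero, mul_one]
      rw [abs_le]
      constructor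
      · nlinarith [(hrv01 s).1, hVB s]
      · nlinarith [(hrv01 s).2, hV0 s, hB1]
    | succ T ih =>
      intro s
      have hstep : eF M γ rv (T+1) s - V s
          = γ * ((M *ᵥ fun x => eF M γ rv T x - V x) s) := by
        rw [eF_succ rv hMs, hVbell s, mulVec_sub_pt]
        ring
      rw [hstep, abs_mul, abs_of_nonneg hγ0']
      calc γ * |(M *ᵥ fun x => eF M γ rv T x - V x) s|
          ≤ γ * (B * γ^T) := by
            have := mulVec_abs_le hMs (fun x => ih x) s
            exact mul_le_mul_of_nonneg_left this hγ0'
        _ = B * γ^(T+1) := by rw [pow_succ]; ring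
  -- one-step variance convergence
  have hosv : ∀ T s, |oneStepVar M (eF M γ rv T) s - σ2 s| ≤ 4*B^2*γ^T := by
    intro T s
    have hgT : (0:ℝ) ≤ γ^T := pow_nonneg hγ0' T
    rw [hσ2def, oneStepVar_eq hMs, oneStepVar_eq hMs]
    have hPQ : |(M *ᵥ fun x => (eF M γ rv T x)^2) s - (M *ᵥ fun x => (V x)^2) s|
        ≤ 2*B^2*γ^T := by
      have h1 : (M *ᵥ fun x => (eF M γ rv T x)^2) s - (M *ᵥ fun x => (V x)^2) s
          = (M *ᵥ fun x => (eF M γ rv T x)^2 - (V x)^2) s := (mulVec_sub_pt M _ _ s).symm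
      rw [h1]
      refine mulVec_abs_le hMs (fun x => ?_) s
      have he : (eF M γ rv T x)^2 - (V x)^2
          = (eF M γ rv T x - V x) * (eF M γ rv T x + V x) := by ring
      rw [he, abs_mul]
      have h2 : |eF M γ rv T x + V x| ≤ 2*B := by
        rw [abs_of_nonneg (by nlinarith [(heF01 T x).1, hV0 x])]
        nlinarith [(heF01 T x).2, hVB x]
      calc |eF M γ rv T x - V x| * |eF M γ rv T x + V x|
          ≤ (B*γ^T) * (2*B) := by
            exact mul_le_mul (heFV T x) h2 (abs_nonneg _) (by positivity)
        _ = 2*B^2*γ^T := by ring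
    have hpq : |((M *ᵥ eF M γ rv T) s)^2 - ((M *ᵥ V) s)^2| ≤ 2*B^2*γ^T := by
      have h1 : ((M *ᵥ eF M γ rv T) s)^2 - ((M *ᵥ V) s)^2
          = ((M *ᵥ eF M γ rv T) s - (M *ᵥ V) s) * ((M *ᵥ eF M γ rv T) s + (M *ᵥ V) s) := by
        ring
      rw [h1, abs_mul]
      have h2 : |(M *ᵥ eF M γ rv T) s - (M *ᵥ V) s| ≤ B*γ^T := by
        rw [← mulVec_sub_pt M _ _ s]
        exact mulVec_abs_le hMs (fun x => heFV T x) s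
      have h3 : |(M *ᵥ eF M γ rv T) s + (M *ᵥ V) s| ≤ 2*B := by
        have ha := mulVec_nonneg' hMs (fun x => (heF01 T x).1) s
        have hb := mulVec_le hMs (fun x => (heF01 T x).2) s
        have hc := mulVec_nonneg' hMs hV0 s
        have hd := mulVec_le hMs hVB s
        rw [abs_of_nonneg (by linarith)]
        linarith
      calc |(M *ᵥ eF M γ rv T) s - (M *ᵥ V) s| * |(M *ᵥ eF M γ rv T) s + (M *ᵥ V) s|
          ≤ (B*γ^T) * (2*B) :=
            mul_le_mul h2 h3 (abs_nonneg _) (by positivity)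
        _ = 2*B^2*γ^T := by ring
    calc |(M *ᵥ fun x => (eF M γ rv T x)^2) s - ((M *ᵥ eF M γ rv T) s)^2
          - ((M *ᵥ fun x => (V x)^2) s - ((M *ᵥ V) s)^2)|
        ≤ |(M *ᵥ fun x => (eF M γ rv T x)^2) s - (M *ᵥ fun x => (V x)^2) s|
          + |((M *ᵥ eF M γ rv T) s)^2 - ((M *ᵥ V) s)^2| := by
          have : (M *ᵥ fun x => (eF M γ rv T x)^2) s - ((M *ᵥ eF M γ rv T) s)^2
              - ((M *ᵥ fun x => (V x)^2) s - ((M *ᵥ V) s)^2)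
              = ((M *ᵥ fun x => (eF M γ rv T x)^2) s - (M *ᵥ fun x => (V x)^2) s)
                - (((M *ᵥ eF M γ rv T) s)^2 - ((M *ᵥ V) s)^2) := by ring
          rw [this]
          exact abs_sub _ _
      _ ≤ 4*B^2*γ^T := by linarith
  -- variance convergence
  set K : ℝ := 5*B^3 with hKdef
  have hK0 : 0 < K := by positivity
  have hvar : ∀ T s, |varF M γ rv T s - L s| ≤ K * γ^T := by
    intro T
    induction T with
    | zero =>
      intro s
      rw [varF_zero rv hMs, pow_zero, mul_one]
      rw [zero_sub, abs_neg, abs_of_nonneg (hL0 s)]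
      nlinarith [hLB s, hB0]
    | succ T ih =>
      intro s
      have hstep : varF M γ rv (T+1) s - L s
          = γ^2 * ((M *ᵥ fun x => varF M γ rv T x - L x) s
            + (oneStepVar M (eF M γ rv T) s - σ2 s)) := by
        rw [varF_succ rv hMs, hLbell s, mulVec_sub_pt]
        ring
      rw [hstep, abs_mul, abs_of_nonneg hγ20]
      have h1 : |(M *ᵥ fun x => varF M γ rv T x - L x) s
            + (oneStepVar M (eF M γ rv T) s - σ2 s)|
          ≤ K*γ^T + 4*B^2*γ^T := by
        calc |(M *ᵥ fun x => varF M γ rv T x - L x) s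
              + (oneStepVar M (eF M γ rv T) s - σ2 s)|
            ≤ |(M *ᵥ fun x => varF M γ rv T x - L x) s|
              + |oneStepVar M (eF M γ rv T) s - σ2 s| := abs_add_le _ _
          _ ≤ K*γ^T + 4*B^2*γ^T := by
              have ha := mulVec_abs_le hMs (fun x => ih x) s
              have hb := hosv T s
              linarith
      calc γ^2 * |(M *ᵥ fun x => varF M γ rv T x - L x) s
            + (oneStepVar M (eF M γ rv T) s - σ2 s)|
          ≤ γ^2 * (K*γ^T + 4*B^2*γ^T) := mul_le_mul_of_nonneg_left h1 hγ20
        _ ≤ K * γ^(T+1) := by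
            have hcoef : γ*(K + 4*B^2) ≤ K := by nlinarith [hBid, hB0, hγ0', hγ1]
            have he1 : γ^2 * (K*γ^T + 4*B^2*γ^T) = (γ*(K+4*B^2))*(γ*γ^T) := by ring
            have he2 : K * γ^(T+1) = K*(γ*γ^T) := by rw [pow_succ]; ring
            rw [he1, he2]
            exact mul_le_mul_of_nonneg_right hcoef (by positivity)
  have hconv : ∀ s, Tendsto (fun T : ℕ => varF M γ rv T s) atTop (nhds (L s)) := by
    intro s
    have h0 : Tendsto (fun T : ℕ => varF M γ rv T s - L s) atTop (nhds 0) := by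
      have hg : Tendsto (fun T : ℕ => K * γ^T) atTop (nhds 0) := by
        have := (tendsto_pow_atTop_nhds_zero_of_lt_one hγ0' hγ1).const_mul K
        simpa using this
      exact squeeze_zero_norm (fun T => by rw [Real.norm_eq_abs]; exact hvar T s) hg
    have := h0.add_const (L s)
    simpa using this
  have hretL : returnVar M rv γ = L := by
    funext s
    exact (hconv s).limUnder_eq
  -- key bound : γ² Z ≤ 2‖L‖
  have hLnorm : ∀ s, L s ≤ ‖L‖ := fun s => le_trans (le_abs_self _) (abs_le_norm' L s)
  have hkey : ∀ s, γ^2 * resApply γ M σ2 s ≤ 2 * ‖L‖ := by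
    intro s
    have hw : ∀ t:ℕ, |((M^t) *ᵥ L) s| ≤ ‖L‖ :=
      fun t => mulVec_abs_le (hMs.pow t) (fun x => abs_le_norm' L x) s
    have hsw : Summable (fun t : ℕ => γ^t * ((M^t) *ᵥ L) s) := summable_res' hMs hγ0' hγ1 L s
    have hsw1 : Summable (fun t : ℕ => γ^t * ((M^(t+1)) *ᵥ L) s) := by
      refine Summable.of_norm_bounded
        ((summable_geometric_of_lt_one hγ0' hγ1).mul_left ‖L‖) fun t => ?_
      rw [Real.norm_eq_abs, abs_mul, abs_pow, abs_of_nonneg hγ0', mul_comm]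
      exact mul_le_mul_of_nonneg_right
        (mulVec_abs_le (hMs.pow (t+1)) (fun x => abs_le_norm' L x) s) (by positivity)
    have hterm : ∀ t:ℕ, γ^2 * (γ^t * ((M^t) *ᵥ σ2) s)
        = γ^t * ((M^t) *ᵥ L) s - γ^2 * (γ^t * ((M^(t+1)) *ᵥ L) s) := by
      intro t
      have h1 : γ^2 * ((M^t) *ᵥ σ2) s = ((M^t) *ᵥ L) s - γ^2 * ((M^(t+1)) *ᵥ L) s := by
        rw [← mulVec_smul_pt (M^t) (γ^2) σ2 s]
        have he : (fun x => γ^2 * σ2 x) = fun x => L x - γ^2 * (M *ᵥ L) x :=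
          funext fun x => by rw [hLbell x]; ring
        rw [he, mulVec_sub_pt]
        have h4 : ((M^t) *ᵥ fun x => γ^2 * (M *ᵥ L) x) s = γ^2 * ((M^(t+1)) *ᵥ L) s := by
          rw [mulVec_smul_pt (M^t) (γ^2) (M *ᵥ L) s, Matrix.mulVec_mulVec, ← pow_succ]
        rw [h4]
      calc γ^2 * (γ^t * ((M^t) *ᵥ σ2) s) = γ^t * (γ^2 * ((M^t) *ᵥ σ2) s) := by ring
        _ = γ^t * (((M^t) *ᵥ L) s - γ^2 * ((M^(t+1)) *ᵥ L) s) := by rw [h1]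
        _ = γ^t * ((M^t) *ᵥ L) s - γ^2 * (γ^t * ((M^(t+1)) *ᵥ L) s) := by ring
    have hcalc : γ^2 * resApply γ M σ2 s
        = (∑' t:ℕ, γ^t * ((M^t) *ᵥ L) s) - γ^2 * ∑' t:ℕ, γ^t * ((M^(t+1)) *ᵥ L) s := by
      rw [resApply_apply hMs hγ0' hγ1, ← tsum_mul_left]
      rw [tsum_congr hterm, Summable.tsum_sub hsw (hsw1.mul_left (γ^2)), tsum_mul_left]
    set Asum : ℝ := ∑' t:ℕ, γ^t * ((M^t) *ᵥ L) s with hAdef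
    set S1 : ℝ := ∑' t:ℕ, γ^t * ((M^(t+1)) *ᵥ L) s with hS1def
    have hshift : Asum = L s + γ * S1 := by
      rw [hAdef, Summable.tsum_eq_zero_add hsw]
      congr 1
      · rw [pow_zero, pow_zero, one_mul, Matrix.one_mulVec]
      · rw [hS1def, ← tsum_mul_left]
        exact tsum_congr fun t => by rw [pow_succ']; ring
    have hAle : Asum ≤ ‖L‖ / (1-γ) := by
      rw [hAdef, ← resApply_apply hMs hγ0' hγ1]
      exact resApply_le hMs hγ0' hγ1 hL0 hLnorm s
    have hgS1 : γ * S1 = Asum - L s := by rw [hshift]; ring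
    rw [hcalc]
    have h5 : γ^2 * S1 = γ * (Asum - L s) := by
      rw [← hgS1]; ring
    rw [h5]
    have h6 : Asum - γ * (Asum - L s) = (1-γ)*Asum + γ * L s := by ring
    rw [h6]
    have h7 : (1-γ)*Asum ≤ ‖L‖ := by
      calc (1-γ)*Asum ≤ (1-γ)*(‖L‖/(1-γ)) := mul_le_mul_of_nonneg_left hAle h1γ.le
        _ = ‖L‖ := by field_simp
    have h8 : γ * L s ≤ ‖L‖ := by
      calc γ * L s ≤ 1 * ‖L‖ := by
            exact mul_le_mul hγ1.le (hLnorm s) (hL0 s) zero_le_one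
        _ = ‖L‖ := one_mul _
    linarith
  -- final assembly
  rw [hdval, ← hσ2def, hretL]
  have hX0 : ∀ s, 0 ≤ resApply γ M (fun x => Real.sqrt (σ2 x)) s :=
    fun s => resApply_nonneg hMs hγ0' hγ1 (fun x => Real.sqrt_nonneg _) s
  have hRHS0 : 0 ≤ Real.sqrt (2/(1-γ)) * Real.sqrt ‖L‖ := by positivity
  have key : ∀ s, γ * resApply γ M (fun x => Real.sqrt (σ2 x)) s
      ≤ Real.sqrt (2/(1-γ)) * Real.sqrt ‖L‖ := by
    intro s
    by_cases hR : ‖L‖ = 0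
    · have hL00 : ∀ x, L x = 0 := by
        intro x
        have h1 : |L x| ≤ ‖L‖ := abs_le_norm' L x
        rw [hR] at h1
        have := abs_nonneg (L x)
        have : |L x| = 0 := le_antisymm h1 this
        exact abs_eq_zero.1 this
      have hσz : ∀ x, σ2 x = 0 := by
        intro x
        have h := hLbell x
        have hML : (M *ᵥ L) x = 0 := by
          rw [Matrix.mulVec, dotProduct]
          exact Finset.sum_eq_zero fun y _ => by rw [hL00 y, mul_zero]
        rw [hL00 x, hML, mul_zero, add_zero] at h
        have hγ2p : 0 < γ^2 := by positivity
        nlinarith [hσ0 x]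
      have hXz : resApply γ M (fun x => Real.sqrt (σ2 x)) s = 0 := by
        rw [resApply_apply hMs hγ0' hγ1]
        have hz : ∀ t:ℕ, γ^t * ((M^t) *ᵥ fun x => Real.sqrt (σ2 x)) s = 0 := by
          intro t
          have he : (fun x => Real.sqrt (σ2 x)) = fun _ : S => (0:ℝ) :=
            funext fun x => by rw [hσz x, Real.sqrt_zero]
          rw [he]
          have : ((M^t) *ᵥ fun _ : S => (0:ℝ)) s = 0 := by
            rw [Matrix.mulVec, dotProduct]
            exact Finset.sum_eq_zero fun y _ => mul_zero _
          rw [this, mul_zero]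
        rw [tsum_congr hz, tsum_zero]
      rw [hXz, mul_zero]
      exact hRHS0
    · have hLpos : 0 < ‖L‖ := lt_of_le_of_ne (norm_nonneg L) (Ne.symm hR)
      set a : ℝ := Real.sqrt ‖L‖ with hadef
      set b : ℝ := Real.sqrt (1-γ) with hbdef
      have ha0 : 0 < a := Real.sqrt_pos.2 hLpos
      have hb0 : 0 < b := Real.sqrt_pos.2 h1γ
      have ha2 : a^2 = ‖L‖ := Real.sq_sqrt (norm_nonneg L)
      have hb2 : b^2 = 1 - γ := Real.sq_sqrt h1γ.le
      set s2 : ℝ := Real.sqrt 2 with hsdef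
      have hs20 : 0 < s2 := Real.sqrt_pos.2 (by norm_num)
      have hs22 : s2^2 = 2 := Real.sq_sqrt (by norm_num)
      set c : ℝ := s2 * a * b / γ with hcdef
      have hc0 : 0 < c := by positivity
      set Z : ℝ := resApply γ M σ2 s with hZdef
      have hZ0 : 0 ≤ Z := resApply_nonneg hMs hγ0' hγ1 hσ0 s
      have hZle : γ^2 * Z ≤ 2 * a^2 := by rw [ha2]; exact hkey s
      have hXle : resApply γ M (fun x => Real.sqrt (σ2 x)) s
          ≤ c/2 * (1-γ)⁻¹ + Z * (1/(2*c)) := by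
        rw [resApply_apply hMs hγ0' hγ1, hZdef, resApply_apply hMs hγ0' hγ1]
        have hterm : ∀ t:ℕ, γ^t * ((M^t) *ᵥ fun x => Real.sqrt (σ2 x)) s
            ≤ c/2 * γ^t + (γ^t * ((M^t) *ᵥ σ2) s) * (1/(2*c)) := by
          intro t
          have hy0 : 0 ≤ ((M^t) *ᵥ σ2) s := mulVec_nonneg' (hMs.pow t) hσ0 s
          have hj : ((M^t) *ᵥ fun x => Real.sqrt (σ2 x)) s
              ≤ Real.sqrt (((M^t) *ᵥ σ2) s) := jensen_pt (hMs.pow t) hσ0 s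
          have hsq : Real.sqrt (((M^t) *ᵥ σ2) s)
              ≤ c/2 + ((M^t) *ᵥ σ2) s * (1/(2*c)) := by
            have h1 := Real.sq_sqrt hy0
            have h2 : 2*c*Real.sqrt (((M^t) *ᵥ σ2) s) ≤ c^2 + ((M^t) *ᵥ σ2) s := by
              nlinarith [sq_nonneg (Real.sqrt (((M^t) *ᵥ σ2) s) - c)]
            have h3 : c/2 + ((M^t) *ᵥ σ2) s * (1/(2*c)) = (c^2 + ((M^t) *ᵥ σ2) s)/(2*c) := by
              field_simp
            rw [h3, le_div_iff₀ (by positivity)]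
            linarith
          calc γ^t * ((M^t) *ᵥ fun x => Real.sqrt (σ2 x)) s
              ≤ γ^t * (c/2 + ((M^t) *ᵥ σ2) s * (1/(2*c))) :=
                mul_le_mul_of_nonneg_left (le_trans hj hsq) (by positivity)
            _ = c/2 * γ^t + (γ^t * ((M^t) *ᵥ σ2) s) * (1/(2*c)) := by ring
        have hs1 : Summable (fun t:ℕ => c/2 * γ^t) :=
          (summable_geometric_of_lt_one hγ0' hγ1).mul_left _
        have hs2' : Summable (fun t:ℕ => (γ^t * ((M^t) *ᵥ σ2) s) * (1/(2*c))) :=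
          (summable_res' hMs hγ0' hγ1 σ2 s).mul_right _
        calc ∑' t:ℕ, γ^t * ((M^t) *ᵥ fun x => Real.sqrt (σ2 x)) s
            ≤ ∑' t:ℕ, (c/2 * γ^t + (γ^t * ((M^t) *ᵥ σ2) s) * (1/(2*c))) :=
              Summable.tsum_le_tsum hterm
                (summable_res' hMs hγ0' hγ1 (fun x => Real.sqrt (σ2 x)) s) (hs1.add hs2')
          _ = c/2 * (1-γ)⁻¹ + (∑' t:ℕ, γ^t * ((M^t) *ᵥ σ2) s) * (1/(2*c)) := by
              rw [Summable.tsum_add hs1 hs2', tsum_mul_left, tsum_mul_right,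
                tsum_geometric_of_lt_one hγ0' hγ1]
      have hDrw : Real.sqrt (2/(1-γ)) = s2 / b := by
        rw [Real.sqrt_div (by norm_num : (0:ℝ) ≤ 2)]
      have h1e : γ * (c/2 * (1-γ)⁻¹) = s2*a/(2*b) := by
        rw [hcdef, ← hb2]
        field_simp
      have h2e : γ * (Z * (1/(2*c))) = γ^2*Z/(2*s2*a*b) := by
        rw [hcdef]
        field_simp
      have h2c : (2*a^2)/(2*s2*a*b) = s2*a/(2*b) := by
        rw [div_eq_div_iff (by positivity) (by positivity)]
        linear_combination (-2)*a^2*b*hs22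
      have ht2 : γ * (Z * (1/(2*c))) ≤ s2*a/(2*b) := by
        rw [h2e, ← h2c]
        exact div_le_div_of_nonneg_right hZle (by positivity)
      have hfin : γ * (c/2 * (1-γ)⁻¹ + Z * (1/(2*c))) ≤ s2/b*a := by
        rw [mul_add, h1e]
        have hsum : s2*a/(2*b) + s2*a/(2*b) = s2/b*a := by
          field_simp
          ring
        linarith
      calc γ * resApply γ M (fun x => Real.sqrt (σ2 x)) s
          ≤ γ * (c/2 * (1-γ)⁻¹ + Z * (1/(2*c))) := mul_le_mul_of_nonneg_left hXle hγ0'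
        _ ≤ s2/b*a := hfin
        _ = Real.sqrt (2/(1-γ)) * Real.sqrt ‖L‖ := by rw [hDrw, hadef]
  rw [mul_comm γ, ← le_div_iff₀ hγ0, pi_norm_le_iff_of_nonneg (div_nonneg hRHS0 hγ0')]
  intro s
  rw [Real.norm_eq_abs, abs_of_nonneg (hX0 s), le_div_iff₀ hγ0, mul_comm]
  exact key s
end PaperMDP
end

section
/- Let (P,r) be any finite MDP, let π* be a Blackwell-optimal policy with gain ρ* = ρ^{π*} and bias h* = h^{π*} (so that P_{π*}ρ* = ρ* and ρ* + h* = r_{π*} + P_{π*}h*). Then for every discount γ ∈ (0,1), ||V_γ^{π*} − (1/(1−γ))·ρ*||_∞ ≤ sp(h*). -/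
open Filter Matrix MeasureTheory
open scoped BigOperators ENNReal

/-!
Write `P = P_π`. The Cesàro means of the powers of `P` lie in the compact set of stochastic
matrices, and any two cluster points `Q, Q'` satisfy `Q Q' = Q'` and `Q Q' = Q`; so they
converge to an idempotent `Q` with `P Q = Q P = Q`. Then `1 - P + Q` is invertible, the Cesàro
means of `∑_{t<T} (P^t - Q)` converge to `H = (1 - Q)(1 - P + Q)⁻¹`, and `ρ = Q r`, `h = H r`
satisfy `P ρ = ρ` and the Poisson equation `ρ + h = r + P h`. Feeding `r = ρ + (h - P h)` into
`V_γ = (I - γ P)⁻¹ r` gives `V_γ - ρ / (1 - γ) = h - (1 - γ) (I - γ P)⁻¹ P h`, and the last term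
is a weighted average of values of `h`, hence lies between `min h` and `max h`.
-/

open Topology

theorem MapClusterPt.map_eq_of_tendsto {X Y α : Type*} [TopologicalSpace X] [TopologicalSpace Y]
    [T2Space Y] {F : Filter α} {u : α → X} {x : X} {g : X → Y} {y : Y}
    (hx : MapClusterPt x F u) (hg : Continuous g) (hy : Tendsto (g ∘ u) F (𝓝 y)) : g x = y :=
  eq_of_nhds_neBot <| ((hx.continuousAt_comp hg.continuousAt).neBot).mono (inf_le_inf_left _ hy)

theorem pow_mul_eq_of_mul_eq {M : Type*} [Monoid M] {a q : M} (h : a * q = q) (n : ℕ) :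
    a ^ n * q = q := by
  induction n with
  | zero => rw [pow_zero, one_mul]
  | succ n ih => rw [pow_succ, mul_assoc, h, ih]

theorem mul_pow_eq_of_mul_eq {M : Type*} [Monoid M] {a q : M} (h : q * a = q) (n : ℕ) :
    q * a ^ n = q := by
  induction n with
  | zero => rw [pow_zero, mul_one]
  | succ n ih => rw [pow_succ', ← mul_assoc, h, ih]

section CesaroAvg

variable {E : Type*}

noncomputable def cesaroAvg [AddCommMonoid E] [Module ℝ E] (f : ℕ → E) (N : ℕ) : E :=
  (N : ℝ)⁻¹ • ∑ T ∈ Finset.range N, f T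

theorem cesaroAvg_const [AddCommMonoid E] [Module ℝ E] (c : E) {N : ℕ} (hN : N ≠ 0) :
    cesaroAvg (fun _ => c) N = c := by
  rw [cesaroAvg, Finset.sum_const, Finset.card_range, ← Nat.cast_smul_eq_nsmul ℝ, smul_smul,
    inv_mul_cancel₀ (Nat.cast_ne_zero.2 hN), one_smul]

theorem cesaroAvg_sub [AddCommGroup E] [Module ℝ E] (f g : ℕ → E) (N : ℕ) :
    cesaroAvg (fun T => f T - g T) N = cesaroAvg f N - cesaroAvg g N := by
  simp only [cesaroAvg, Finset.sum_sub_distrib, smul_sub]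

theorem mul_cesaroAvg [Ring E] [Algebra ℝ E] (a : E) (f : ℕ → E) (N : ℕ) :
    a * cesaroAvg f N = cesaroAvg (fun T => a * f T) N := by
  simp only [cesaroAvg, mul_smul_comm, Finset.mul_sum]

theorem cesaroAvg_mul [Ring E] [Algebra ℝ E] (f : ℕ → E) (a : E) (N : ℕ) :
    cesaroAvg f N * a = cesaroAvg (fun T => f T * a) N := by
  simp only [cesaroAvg, smul_mul_assoc, Finset.sum_mul]

theorem mul_cesaroAvg_pow_sub [Ring E] [Algebra ℝ E] (a : E) (N : ℕ) :
    a * cesaroAvg (a ^ ·) N - cesaroAvg (a ^ ·) N = (N : ℝ)⁻¹ • (a ^ N - 1) := by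
  rw [mul_cesaroAvg, ← cesaroAvg_sub, cesaroAvg]
  simp only [← pow_succ', Finset.sum_range_sub (a ^ ·), pow_zero]

theorem cesaroAvg_pow_mul_sub [Ring E] [Algebra ℝ E] (a : E) (N : ℕ) :
    cesaroAvg (a ^ ·) N * a - cesaroAvg (a ^ ·) N = (N : ℝ)⁻¹ • (a ^ N - 1) := by
  rw [cesaroAvg_mul, ← cesaroAvg_sub, cesaroAvg]
  simp only [← pow_succ, Finset.sum_range_sub (a ^ ·), pow_zero]

theorem cesaroAvg_pow_mul_of_mul_eq [Ring E] [Algebra ℝ E] {a q : E} (h : a * q = q) {N : ℕ}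
    (hN : N ≠ 0) : cesaroAvg (a ^ ·) N * q = q := by
  simp only [cesaroAvg_mul, pow_mul_eq_of_mul_eq h, cesaroAvg_const q hN]

theorem mul_cesaroAvg_pow_of_mul_eq [Ring E] [Algebra ℝ E] {a q : E} (h : q * a = q) {N : ℕ}
    (hN : N ≠ 0) : q * cesaroAvg (a ^ ·) N = q := by
  simp only [mul_cesaroAvg, mul_pow_eq_of_mul_eq h, cesaroAvg_const q hN]

theorem Matrix.cesaroAvg_mulVec {S : Type*} [Fintype S] (A : ℕ → Matrix S S ℝ) (v : S → ℝ)
    (N : ℕ) : cesaroAvg A N *ᵥ v = cesaroAvg (fun T => A T *ᵥ v) N := by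
  rw [cesaroAvg, cesaroAvg, smul_mulVec, sum_mulVec]

end CesaroAvg

namespace Matrix

variable {S : Type*} [Fintype S] [DecidableEq S] {P : Matrix S S ℝ}

theorem mulVec_le_of_forall_le (hP : P ∈ rowStochastic ℝ S) {v : S → ℝ} {c : ℝ}
    (hv : ∀ j, v j ≤ c) (i : S) : (P *ᵥ v) i ≤ c :=
  calc (P *ᵥ v) i = ∑ j, P i j * v j := rfl
    _ ≤ ∑ j, P i j * c :=
      Finset.sum_le_sum fun j _ => mul_le_mul_of_nonneg_left (hv j) (nonneg_of_mem_rowStochastic hP)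
    _ = c := by rw [← Finset.sum_mul, sum_row_of_mem_rowStochastic hP, one_mul]

theorem le_mulVec_of_forall_le (hP : P ∈ rowStochastic ℝ S) {v : S → ℝ} {c : ℝ}
    (hv : ∀ j, c ≤ v j) (i : S) : c ≤ (P *ᵥ v) i :=
  calc c = ∑ j, P i j * c := by rw [← Finset.sum_mul, sum_row_of_mem_rowStochastic hP, one_mul]
    _ ≤ ∑ j, P i j * v j :=
      Finset.sum_le_sum fun j _ => mul_le_mul_of_nonneg_left (hv j) (nonneg_of_mem_rowStochastic hP)
    _ = (P *ᵥ v) i := rfl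

theorem norm_mulVec_le_of_mem_rowStochastic (hP : P ∈ rowStochastic ℝ S) (v : S → ℝ) :
    ‖P *ᵥ v‖ ≤ ‖v‖ :=
  (pi_norm_le_iff_of_nonneg (norm_nonneg v)).2 fun i => abs_le.2
    ⟨le_mulVec_of_forall_le hP (fun j => (abs_le.1 (norm_le_pi_norm v j)).1) i,
      mulVec_le_of_forall_le hP (fun j => (abs_le.1 (norm_le_pi_norm v j)).2) i⟩

theorem isCompact_rowStochastic : IsCompact (rowStochastic ℝ S : Set (Matrix S S ℝ)) := by
  have hbox : IsCompact (Set.univ.pi fun _ : S => Set.univ.pi fun _ : S => Set.Icc (0 : ℝ) 1) :=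
    isCompact_univ_pi fun _ => isCompact_univ_pi fun _ => isCompact_Icc
  have hclosed : IsClosed (rowStochastic ℝ S : Set (Matrix S S ℝ)) := by
    have : (rowStochastic ℝ S : Set (Matrix S S ℝ)) =
        (⋂ i, ⋂ j, {M : Matrix S S ℝ | 0 ≤ M i j}) ∩ {M | M *ᵥ 1 = 1} := by
      ext M
      simp [mem_rowStochastic]
    rw [this]
    exact (isClosed_iInter fun i => isClosed_iInter fun j =>
      isClosed_le continuous_const (continuous_apply_apply i j)).inter
      (isClosed_eq (continuous_id.matrix_mulVec continuous_const) continuous_const)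
  refine hbox.of_isClosed_subset hclosed fun M hM => ?_
  simp only [Set.mem_pi, Set.mem_univ, Set.mem_Icc, true_implies]
  exact fun i j => ⟨nonneg_of_mem_rowStochastic hM, le_one_of_mem_rowStochastic hM⟩

theorem cesaroAvg_pow_mem_rowStochastic (hP : P ∈ rowStochastic ℝ S) {N : ℕ} (hN : N ≠ 0) :
    cesaroAvg (P ^ ·) N ∈ rowStochastic ℝ S := by
  rw [cesaroAvg, Finset.smul_sum]
  refine convex_rowStochastic.sum_mem (fun _ _ => by positivity) ?_ fun T _ => pow_mem hP T
  rw [Finset.sum_const, Finset.card_range, nsmul_eq_mul, mul_inv_cancel₀ (Nat.cast_ne_zero.2 hN)]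

theorem tendsto_inv_smul_pow_sub_one (hP : P ∈ rowStochastic ℝ S) :
    Tendsto (fun N : ℕ => (N : ℝ)⁻¹ • (P ^ N - 1)) atTop (𝓝 0) := by
  refine tendsto_pi_nhds.2 fun i => tendsto_pi_nhds.2 fun j => ?_
  refine squeeze_zero_norm (fun N => ?_)
    (tendsto_inv_atTop_zero.comp tendsto_natCast_atTop_atTop)
  have hPN := pow_mem hP N
  have hone := one_mem (rowStochastic ℝ S)
  have hbound : |(P ^ N) i j - (1 : Matrix S S ℝ) i j| ≤ 1 := abs_sub_le_of_nonneg_of_le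
    (nonneg_of_mem_rowStochastic hPN) (le_one_of_mem_rowStochastic hPN)
    (nonneg_of_mem_rowStochastic hone) (le_one_of_mem_rowStochastic hone)
  simpa [abs_mul] using mul_le_of_le_one_right (by positivity : (0 : ℝ) ≤ (N : ℝ)⁻¹) hbound

theorem mul_eq_of_mapClusterPt_cesaroAvg_pow (hP : P ∈ rowStochastic ℝ S) {Q : Matrix S S ℝ}
    (hQ : MapClusterPt Q atTop (cesaroAvg (P ^ ·))) : P * Q = Q ∧ Q * P = Q := by
  constructor <;> rw [← sub_eq_zero]
  · exact hQ.map_eq_of_tendsto (g := fun M => P * M - M) (by fun_prop)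
      ((tendsto_inv_smul_pow_sub_one hP).congr fun N => (mul_cesaroAvg_pow_sub P N).symm)
  · exact hQ.map_eq_of_tendsto (g := fun M => M * P - M) (by fun_prop)
      ((tendsto_inv_smul_pow_sub_one hP).congr fun N => (cesaroAvg_pow_mul_sub P N).symm)

theorem exists_tendsto_cesaroAvg_pow (hP : P ∈ rowStochastic ℝ S) :
    ∃ Q, Tendsto (cesaroAvg (P ^ ·)) atTop (𝓝 Q) ∧ P * Q = Q ∧ Q * P = Q ∧ Q * Q = Q := by
  have hmem : ∀ᶠ N in atTop, cesaroAvg (P ^ ·) N ∈ rowStochastic ℝ S :=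
    (eventually_ne_atTop 0).mono fun N hN => cesaroAvg_pow_mem_rowStochastic hP hN
  have hleft {A : Matrix S S ℝ} (hA : A * P = A) :
      Tendsto (fun N => A * cesaroAvg (P ^ ·) N) atTop (𝓝 A) :=
    tendsto_const_nhds.congr' <| (eventually_ne_atTop 0).mono fun N hN =>
      (mul_cesaroAvg_pow_of_mul_eq hA hN).symm
  have hright {A : Matrix S S ℝ} (hA : P * A = A) :
      Tendsto (fun N => cesaroAvg (P ^ ·) N * A) atTop (𝓝 A) :=
    tendsto_const_nhds.congr' <| (eventually_ne_atTop 0).mono fun N hN =>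
      (cesaroAvg_pow_mul_of_mul_eq hA hN).symm
  obtain ⟨Q, -, hQ⟩ := isCompact_rowStochastic.exists_mapClusterPt (le_principal_iff.2 hmem)
  have hQP := mul_eq_of_mapClusterPt_cesaroAvg_pow hP hQ
  have hunique (Q' : Matrix S S ℝ) (hQ' : MapClusterPt Q' atTop (cesaroAvg (P ^ ·))) : Q' = Q :=
    (hQ.map_eq_of_tendsto (continuous_mul_const Q')
      (hright (mul_eq_of_mapClusterPt_cesaroAvg_pow hP hQ').1)).symm.trans
    (hQ'.map_eq_of_tendsto (continuous_const_mul Q) (hleft hQP.2))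
  exact ⟨Q, isCompact_rowStochastic.tendsto_nhds_of_unique_mapClusterPt hmem
    fun Q' _ => hunique Q', hQP.1, hQP.2,
    hQ.map_eq_of_tendsto (continuous_const_mul Q) (hleft hQP.2)⟩

theorem pow_mulVec_eq_of_mulVec_eq {z : S → ℝ} (h : P *ᵥ z = z) (t : ℕ) : P ^ t *ᵥ z = z := by
  induction t with
  | zero => rw [pow_zero, one_mulVec]
  | succ t ih => rw [pow_succ, ← mulVec_mulVec, h, ih]

section Deviation

variable {Q : Matrix S S ℝ}

noncomputable def deviationMatrix (P Q : Matrix S S ℝ) : Matrix S S ℝ := (1 - Q) * (1 - P + Q)⁻¹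

theorem sum_range_pow_sub_mul_one_sub_add (hPQ : P * Q = Q) (hQP : Q * P = Q) (hQQ : Q * Q = Q)
    (T : ℕ) : (∑ t ∈ Finset.range T, (P ^ t - Q)) * (1 - P + Q) = 1 - P ^ T := by
  have hterm (t : ℕ) : (P ^ t - Q) * (1 - P + Q) = P ^ t - P ^ (t + 1) := by
    rw [sub_mul, mul_add, mul_sub, mul_add, mul_sub, mul_one, mul_one, ← pow_succ, hQP, hQQ,
      pow_mul_eq_of_mul_eq hPQ]
    abel
  rw [Finset.sum_mul, Finset.sum_congr rfl fun t _ => hterm t, Finset.sum_range_sub', pow_zero]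

theorem one_sub_mul_sum_range_pow_sub (hPQ : P * Q = Q) (T : ℕ) :
    (1 - P) * ∑ t ∈ Finset.range T, (P ^ t - Q) = 1 - P ^ T := by
  have hterm (t : ℕ) : (1 - P) * (P ^ t - Q) = P ^ t - P ^ (t + 1) := by
    rw [sub_mul, mul_sub, mul_sub, one_mul, one_mul, ← pow_succ', hPQ]
    abel
  rw [Finset.mul_sum, Finset.sum_congr rfl fun t _ => hterm t, Finset.sum_range_sub', pow_zero]

theorem isUnit_one_sub_add (hlim : Tendsto (cesaroAvg (P ^ ·)) atTop (𝓝 Q))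
    (hQP : Q * P = Q) (hQQ : Q * Q = Q) : IsUnit (1 - P + Q) := by
  rw [← mulVec_injective_iff_isUnit]
  intro x y hxy
  rw [← sub_eq_zero] at hxy ⊢
  set z := x - y
  replace hxy : (1 - P + Q) *ᵥ z = 0 := by rw [mulVec_sub, hxy]
  have hQz : Q *ᵥ z = 0 := by
    have hQZ : Q * (1 - P + Q) = Q := by
      rw [mul_add, mul_sub, mul_one, hQP, hQQ, sub_self, zero_add]
    rw [← hQZ, ← mulVec_mulVec, hxy, mulVec_zero]
  have hPz : P *ᵥ z = z := by
    rw [add_mulVec, sub_mulVec, one_mulVec, hQz, add_zero, sub_eq_zero] at hxy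
    exact hxy.symm
  have hcesaro : Tendsto (fun N => cesaroAvg (P ^ ·) N *ᵥ z) atTop (𝓝 z) :=
    tendsto_const_nhds.congr' <| (eventually_ne_atTop 0).mono fun N hN => by
      simp only [cesaroAvg_mulVec, pow_mulVec_eq_of_mulVec_eq hPz, cesaroAvg_const z hN]
  have hQz' : Q *ᵥ z = z := tendsto_nhds_unique
    ((continuous_id.matrix_mulVec continuous_const).continuousAt.tendsto.comp hlim) hcesaro
  rw [← hQz', hQz]

theorem tendsto_cesaroAvg_sum_range_pow_sub (hlim : Tendsto (cesaroAvg (P ^ ·)) atTop (𝓝 Q))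
    (hPQ : P * Q = Q) (hQP : Q * P = Q) (hQQ : Q * Q = Q) :
    Tendsto (cesaroAvg fun T => ∑ t ∈ Finset.range T, (P ^ t - Q)) atTop
      (𝓝 (deviationMatrix P Q)) := by
  have hdet := (isUnit_iff_isUnit_det _).1 (isUnit_one_sub_add hlim hQP hQQ)
  refine ((Continuous.tendsto (f := fun M => (1 - M) * (1 - P + Q)⁻¹) (by fun_prop) Q).comp
    hlim).congr' ((eventually_ne_atTop 0).mono fun N hN => ?_)
  rw [Function.comp_apply, ← mul_nonsing_inv_cancel_right _
    (cesaroAvg (fun T => ∑ t ∈ Finset.range T, (P ^ t - Q)) N) hdet, cesaroAvg_mul]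
  simp only [sum_range_pow_sub_mul_one_sub_add hPQ hQP hQQ, cesaroAvg_sub, cesaroAvg_const _ hN]

theorem one_sub_mul_deviationMatrix (hlim : Tendsto (cesaroAvg (P ^ ·)) atTop (𝓝 Q))
    (hPQ : P * Q = Q) (hQP : Q * P = Q) (hQQ : Q * Q = Q) :
    (1 - P) * deviationMatrix P Q = 1 - Q := by
  refine tendsto_nhds_unique ((continuous_const_mul (1 - P)).continuousAt.tendsto.comp
    (tendsto_cesaroAvg_sum_range_pow_sub hlim hPQ hQP hQQ)) ?_
  refine ((Continuous.tendsto (f := fun M => 1 - M) (by fun_prop) Q).comp hlim).congr'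
    ((eventually_ne_atTop 0).mono fun N hN => ?_)
  simp only [Function.comp_apply, mul_cesaroAvg, one_sub_mul_sum_range_pow_sub hPQ,
    cesaroAvg_sub, cesaroAvg_const _ hN]

end Deviation

end Matrix

namespace PaperMDP

variable {S A : Type*} [Fintype S]

theorem span_nonneg {ι : Type*} [Finite ι] (v : ι → ℝ) : 0 ≤ span v := by
  rcases isEmpty_or_nonempty ι with hι | hι
  · simp [span]
  · exact sub_nonneg.2 (ciInf_le_ciSup (Set.finite_range v).bddBelow (Set.finite_range v).bddAbove)

theorem norm_sub_le_span {v x : S → ℝ} (hx : ∀ s, (⨅ i, v i) ≤ x s ∧ x s ≤ ⨆ i, v i) :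
    ‖v - x‖ ≤ span v :=
  (pi_norm_le_iff_of_nonneg (span_nonneg v)).2 fun s => by
    have hlo := ciInf_le (Set.finite_range v).bddBelow s
    have hhi := le_ciSup (Set.finite_range v).bddAbove s
    rw [Pi.sub_apply, Real.norm_eq_abs, abs_le, span]
    constructor <;> linarith [hx s]

theorem cesaro_mulVec_of_tendsto {B : ℕ → Matrix S S ℝ} {L : Matrix S S ℝ}
    (h : Tendsto (cesaroAvg B) atTop (𝓝 L)) (v : S → ℝ) :
    cesaro (fun T => B T *ᵥ v) = L *ᵥ v :=
  (((continuous_id.matrix_mulVec continuous_const).tendsto L).comp h |>.congr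
    fun N => cesaroAvg_mulVec B v N).limUnder_eq

variable [DecidableEq S]

section Discounted

variable {P : Matrix S S ℝ} {γ : ℝ}

theorem summable_pow_smul_pow_mulVec (hP : P ∈ rowStochastic ℝ S) (hγ0 : 0 ≤ γ) (hγ1 : γ < 1)
    (v : S → ℝ) : Summable fun t : ℕ => γ ^ t • (P ^ t *ᵥ v) :=
  .of_norm_bounded ((summable_geometric_of_lt_one hγ0 hγ1).mul_right ‖v‖) fun t => by
    rw [norm_smul, norm_pow, Real.norm_of_nonneg hγ0]
    gcongr
    exact norm_mulVec_le_of_mem_rowStochastic (pow_mem hP t) v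

theorem resApply_eq_add (hP : P ∈ rowStochastic ℝ S) (hγ0 : 0 ≤ γ) (hγ1 : γ < 1) (v : S → ℝ) :
    resApply γ P v = v + γ • (P *ᵥ resApply γ P v) := by
  have hs := summable_pow_smul_pow_mulVec hP hγ0 hγ1 v
  have hshift : HasSum (fun t : ℕ => γ ^ (t + 1) • (P ^ (t + 1) *ᵥ v))
      (γ • (P *ᵥ resApply γ P v)) := by
    convert (hs.hasSum.map (mulVecLin P) (mulVecLin P).continuous_of_finiteDimensional).const_smul γ
      using 1
    · ext1 t
      simp only [Function.comp_apply, mulVecLin_apply, mulVec_smul, smul_smul, mulVec_mulVec,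
        pow_succ']
    · rfl
  calc resApply γ P v = ∑' t : ℕ, γ ^ t • (P ^ t *ᵥ v) := rfl
    _ = v + γ • (P *ᵥ resApply γ P v) := by
      rw [hs.tsum_eq_zero_add, hshift.tsum_eq, pow_zero, pow_zero, one_smul, one_mulVec]

theorem eq_resApply_of_eq_add (hP : P ∈ rowStochastic ℝ S) (hγ0 : 0 ≤ γ) (hγ1 : γ < 1)
    {v x : S → ℝ} (hx : x = v + γ • (P *ᵥ x)) : x = resApply γ P v := by
  set y := resApply γ P v
  have hy := resApply_eq_add hP hγ0 hγ1 v
  have hd : x - y = γ • (P *ᵥ (x - y)) := by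
    calc x - y = (v + γ • (P *ᵥ x)) - (v + γ • (P *ᵥ y)) := by rw [← hx, ← hy]
      _ = γ • (P *ᵥ (x - y)) := by rw [mulVec_sub, smul_sub]; abel
  have hcontract : ‖x - y‖ ≤ γ * ‖x - y‖ :=
    calc ‖x - y‖ = ‖γ • (P *ᵥ (x - y))‖ := congrArg _ hd
      _ ≤ γ * ‖x - y‖ := by
        rw [norm_smul, Real.norm_of_nonneg hγ0]
        gcongr
        exact norm_mulVec_le_of_mem_rowStochastic hP _
  exact sub_eq_zero.1 (norm_le_zero_iff.1 (by nlinarith [norm_nonneg (x - y)]))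

theorem resApply_add (hP : P ∈ rowStochastic ℝ S) (hγ0 : 0 ≤ γ) (hγ1 : γ < 1) (v w : S → ℝ) :
    resApply γ P (v + w) = resApply γ P v + resApply γ P w := by
  refine (eq_resApply_of_eq_add hP hγ0 hγ1 ?_).symm
  conv_lhs => rw [resApply_eq_add hP hγ0 hγ1 v, resApply_eq_add hP hγ0 hγ1 w]
  rw [mulVec_add, smul_add]
  abel

theorem resApply_of_mulVec_eq (hP : P ∈ rowStochastic ℝ S) (hγ0 : 0 ≤ γ) (hγ1 : γ < 1)
    {ρ : S → ℝ} (hρ : P *ᵥ ρ = ρ) : resApply γ P ρ = (1 - γ)⁻¹ • ρ := by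
  refine (eq_resApply_of_eq_add hP hγ0 hγ1 ?_).symm
  rw [mulVec_smul, hρ, smul_smul]
  have : 1 - γ ≠ 0 := by linarith
  match_scalars
  field_simp
  ring

theorem resApply_sub_mulVec (hP : P ∈ rowStochastic ℝ S) (hγ0 : 0 ≤ γ) (hγ1 : γ < 1)
    (v : S → ℝ) :
    resApply γ P (v - P *ᵥ v) = v - (1 - γ) • resApply γ P (P *ᵥ v) := by
  refine (eq_resApply_of_eq_add hP hγ0 hγ1 ?_).symm
  rw [mulVec_sub, mulVec_smul]
  linear_combination (norm := module) (γ - 1) • resApply_eq_add hP hγ0 hγ1 (P *ᵥ v)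

theorem one_sub_mul_resApply_le (hP : P ∈ rowStochastic ℝ S) (hγ0 : 0 ≤ γ) (hγ1 : γ < 1)
    {v : S → ℝ} {c : ℝ} (hv : ∀ j, v j ≤ c) (s : S) : (1 - γ) * resApply γ P v s ≤ c := by
  set x := resApply γ P v
  have : Nonempty S := ⟨s⟩
  obtain ⟨s₀, hs₀⟩ := Finite.exists_max x
  have hmax : x s₀ ≤ c + γ * x s₀ :=
    calc x s₀ = v s₀ + γ * (P *ᵥ x) s₀ := congrFun (resApply_eq_add hP hγ0 hγ1 v) s₀
      _ ≤ c + γ * x s₀ := by gcongr; exacts [hv s₀, mulVec_le_of_forall_le hP hs₀ s₀]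
  nlinarith [hs₀ s]

theorem le_one_sub_mul_resApply (hP : P ∈ rowStochastic ℝ S) (hγ0 : 0 ≤ γ) (hγ1 : γ < 1)
    {v : S → ℝ} {c : ℝ} (hv : ∀ j, c ≤ v j) (s : S) : c ≤ (1 - γ) * resApply γ P v s := by
  set x := resApply γ P v
  have : Nonempty S := ⟨s⟩
  obtain ⟨s₀, hs₀⟩ := Finite.exists_min x
  have hmin : c + γ * x s₀ ≤ x s₀ :=
    calc c + γ * x s₀ ≤ v s₀ + γ * (P *ᵥ x) s₀ := by
          gcongr; exacts [hv s₀, le_mulVec_of_forall_le hP hs₀ s₀]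
      _ = x s₀ := (congrFun (resApply_eq_add hP hγ0 hγ1 v) s₀).symm
  nlinarith [hs₀ s]

end Discounted

variable [Fintype A] {p : S → A → S → ℝ} {r : S → A → ℝ} {pol : S → A → ℝ}

theorem polMat_mem_rowStochastic (hp : IsKernel p) (hpol : IsPolicy pol) :
    polMat p pol ∈ rowStochastic ℝ S := by
  refine mem_rowStochastic_iff_sum.2 ⟨fun s s' => Finset.sum_nonneg fun a _ =>
    mul_nonneg ((hpol s).1 a) ((hp s a).1 s'), fun s => ?_⟩
  simp only [polMat, of_apply]
  rw [Finset.sum_comm]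
  simp only [← Finset.mul_sum, (hp s _).2, mul_one, (hpol s).2]

theorem gain_eq_mulVec {Q : Matrix S S ℝ}
    (hlim : Tendsto (cesaroAvg (polMat p pol ^ ·)) atTop (𝓝 Q)) :
    gain p r pol = Q *ᵥ polRew r pol :=
  cesaro_mulVec_of_tendsto hlim _

theorem bias_eq_mulVec {Q : Matrix S S ℝ}
    (hlim : Tendsto (cesaroAvg (polMat p pol ^ ·)) atTop (𝓝 Q)) (hPQ : polMat p pol * Q = Q)
    (hQP : Q * polMat p pol = Q) (hQQ : Q * Q = Q) :
    bias p r pol = deviationMatrix (polMat p pol) Q *ᵥ polRew r pol := by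
  rw [bias, gain_eq_mulVec hlim,
    ← cesaro_mulVec_of_tendsto (tendsto_cesaroAvg_sum_range_pow_sub hlim hPQ hQP hQQ)]
  simp only [sum_mulVec, sub_mulVec]

theorem polMat_mulVec_gain (hp : IsKernel p) (hpol : IsPolicy pol) :
    polMat p pol *ᵥ gain p r pol = gain p r pol := by
  obtain ⟨Q, hlim, hPQ, -⟩ := exists_tendsto_cesaroAvg_pow (polMat_mem_rowStochastic hp hpol)
  rw [gain_eq_mulVec hlim, mulVec_mulVec, hPQ]

theorem gain_add_bias (hp : IsKernel p) (hpol : IsPolicy pol) :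
    gain p r pol + bias p r pol = polRew r pol + polMat p pol *ᵥ bias p r pol := by
  obtain ⟨Q, hlim, hPQ, hQP, hQQ⟩ :=
    exists_tendsto_cesaroAvg_pow (polMat_mem_rowStochastic hp hpol)
  rw [gain_eq_mulVec hlim, bias_eq_mulVec hlim hPQ hQP hQQ]
  have hpoisson := congrArg (· *ᵥ polRew r pol) (one_sub_mul_deviationMatrix hlim hPQ hQP hQQ)
  rw [← mulVec_mulVec] at hpoisson
  simp only [sub_mulVec, one_mulVec] at hpoisson
  linear_combination (norm := module) hpoisson

theorem stmt14_general {S A : Type*} [Fintype S] [Fintype A] [DecidableEq S]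
    (p : S → A → S → ℝ) (hp : IsKernel p)
    (r : S → A → ℝ)
    (polB : S → A → ℝ) (hpolB : Blackwell p r polB)
    (γ : ℝ) (hγ : γ ∈ Set.Ioo (0 : ℝ) 1) :
    ‖dval p r γ polB - (1 - γ)⁻¹ • gain p r polB‖ ≤ span (bias p r polB) := by
  have hγ0 : 0 ≤ γ := hγ.1.le
  have hγ1 : γ < 1 := hγ.2
  have hP := polMat_mem_rowStochastic hp hpolB.1
  set P := polMat p polB
  set h := bias p r polB
  have hr : polRew r polB = gain p r polB + (h - P *ᵥ h) := by
    linear_combination (norm := module) -(gain_add_bias (r := r) hp hpolB.1)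
  have hdiff : dval p r γ polB - (1 - γ)⁻¹ • gain p r polB =
      h - (1 - γ) • resApply γ P (P *ᵥ h) := by
    rw [dval, hr, resApply_add hP hγ0 hγ1, resApply_of_mulVec_eq hP hγ0 hγ1
      (polMat_mulVec_gain hp hpolB.1), resApply_sub_mulVec hP hγ0 hγ1, add_sub_cancel_left]
  rw [hdiff]
  exact norm_sub_le_span fun s =>
    ⟨le_one_sub_mul_resApply hP hγ0 hγ1
      (le_mulVec_of_forall_le hP fun j => ciInf_le (Set.finite_range h).bddBelow j) s,
    one_sub_mul_resApply_le hP hγ0 hγ1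
      (mulVec_le_of_forall_le hP fun j => le_ciSup (Set.finite_range h).bddAbove j) s⟩

/-- For any finite MDP and any Blackwell-optimal policy `π^*` with gain
`ρ^*` and bias `h^*`, for every `γ ∈ (0,1)`:
`‖V_γ^{π^*} - (1/(1-γ))ρ^*‖_∞ ≤ sp(h^*)`. -/
theorem stmt14 {S A : Type*} [Fintype S] [Fintype A] [DecidableEq S] [DecidableEq A]
    [Nonempty S] [Nonempty A]
    (p : S → A → S → ℝ) (hp : IsKernel p)
    (r : S → A → ℝ) (hr : ∀ s a, r s a ∈ Set.Icc (0 : ℝ) 1)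
    (polB : S → A → ℝ) (hpolB : Blackwell p r polB)
    (γ : ℝ) (hγ : γ ∈ Set.Ioo (0 : ℝ) 1) :
    ‖dval p r γ polB - (1 - γ)⁻¹ • gain p r polB‖ ≤ span (bias p r polB) :=
  stmt14_general p hp r polB hpolB γ hγ

end PaperMDP
end
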